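/- arXiv:2403.01287 — 3 statements merged into one kernel-verified Lean document; each statement's English description precedes it below -/
import Mathlib

section
/- Let K be a field of characteristic 0 and let t, d ∈ K. The Weierstrass curve C_{9,1}(t,d) has invariants c₄ = 144·d²·(t+6)·(t³+234t²+756t+2160), c₆ = 1728·d³·(t⁶−504t⁵−16632t⁴−123012t³−517104t²−1143072t−1475496), and discriminant Δ = 2¹²·3⁶·d⁶·(t−3)⁹·(t²+3t+9); moreover, if Δ ≠ 0 then its j-invariant equals (t+6)³·(t³+234t²+756t+2160)³ / ((t−3)⁹·(t²+3t+9)). -/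
noncomputable section

/-- The curve `C_{9,1}(t,d)`. -/
def C91 {K : Type*} [Field K] (t d : K) : WeierstrassCurve K :=
  { a₁ := 0, a₂ := 0, a₃ := 0,
    a₄ := -3 * d ^ 2 * (t + 6) * (t ^ 3 + 234 * t ^ 2 + 756 * t + 2160),
    a₆ := -2 * d ^ 3 * (t ^ 6 - 504 * t ^ 5 - 16632 * t ^ 4 - 123012 * t ^ 3 - 517104 * t ^ 2 - 1143072 * t - 1475496) }

section

variable {K : Type*} [Field K] (t d : K)

theorem C91_c₄ :
    (C91 t d).c₄ = 144 * d ^ 2 * (t + 6) * (t ^ 3 + 234 * t ^ 2 + 756 * t + 2160) := by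
  simp only [C91, WeierstrassCurve.c₄, WeierstrassCurve.b₂, WeierstrassCurve.b₄]
  ring

theorem C91_c₆ :
    (C91 t d).c₆ = 1728 * d ^ 3 * (t ^ 6 - 504 * t ^ 5 - 16632 * t ^ 4 - 123012 * t ^ 3 -
      517104 * t ^ 2 - 1143072 * t - 1475496) := by
  simp only [C91, WeierstrassCurve.c₆, WeierstrassCurve.b₂, WeierstrassCurve.b₄,
    WeierstrassCurve.b₆]
  ring

theorem C91_Δ :
    (C91 t d).Δ = 2 ^ 12 * 3 ^ 6 * d ^ 6 * (t - 3) ^ 9 * (t ^ 2 + 3 * t + 9) := by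
  simp only [C91, WeierstrassCurve.Δ, WeierstrassCurve.b₂, WeierstrassCurve.b₄,
    WeierstrassCurve.b₆, WeierstrassCurve.b₈]
  ring

/-- Since `144 ^ 3 = 2 ^ 12 * 3 ^ 6`, the factor `2 ^ 12 * 3 ^ 6 * d ^ 6` cancels from `c₄³ / Δ`. -/
theorem C91_c₄_pow_three_div_Δ (h : (C91 t d).Δ ≠ 0) :
    (C91 t d).c₄ ^ 3 / (C91 t d).Δ =
      (t + 6) ^ 3 * (t ^ 3 + 234 * t ^ 2 + 756 * t + 2160) ^ 3 /
        ((t - 3) ^ 9 * (t ^ 2 + 3 * t + 9)) := by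
  have hΔ : (C91 t d).Δ = 2 ^ 12 * 3 ^ 6 * d ^ 6 * ((t - 3) ^ 9 * (t ^ 2 + 3 * t + 9)) := by
    rw [C91_Δ]; ring
  have hc₄ : (C91 t d).c₄ ^ 3 =
      2 ^ 12 * 3 ^ 6 * d ^ 6 * ((t + 6) ^ 3 * (t ^ 3 + 234 * t ^ 2 + 756 * t + 2160) ^ 3) := by
    rw [C91_c₄]; ring
  rw [hΔ] at h ⊢
  rw [hc₄, mul_div_mul_left _ _ (left_ne_zero_of_mul h)]

end

theorem stmt0_general {K : Type*} [Field K] (t d : K) :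
    (C91 t d).c₄ = 144 * d ^ 2 * (t + 6) * (t ^ 3 + 234 * t ^ 2 + 756 * t + 2160) ∧
    (C91 t d).c₆ = 1728 * d ^ 3 * (t ^ 6 - 504 * t ^ 5 - 16632 * t ^ 4 - 123012 * t ^ 3 - 517104 * t ^ 2 - 1143072 * t - 1475496) ∧
    (C91 t d).Δ = 2 ^ 12 * 3 ^ 6 * d ^ 6 * (t - 3) ^ 9 * (t ^ 2 + 3 * t + 9) ∧
    ((C91 t d).Δ ≠ 0 → (C91 t d).c₄ ^ 3 / (C91 t d).Δ =
      (t + 6) ^ 3 * (t ^ 3 + 234 * t ^ 2 + 756 * t + 2160) ^ 3 / ((t - 3) ^ 9 * (t ^ 2 + 3 * t + 9))) :=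
  ⟨C91_c₄ t d, C91_c₆ t d, C91_Δ t d, C91_c₄_pow_three_div_Δ t d⟩

theorem stmt0 {K : Type*} [Field K] [CharZero K] (t d : K) :
    (C91 t d).c₄ = 144 * d ^ 2 * (t + 6) * (t ^ 3 + 234 * t ^ 2 + 756 * t + 2160) ∧
    (C91 t d).c₆ = 1728 * d ^ 3 * (t ^ 6 - 504 * t ^ 5 - 16632 * t ^ 4 - 123012 * t ^ 3 - 517104 * t ^ 2 - 1143072 * t - 1475496) ∧
    (C91 t d).Δ = 2 ^ 12 * 3 ^ 6 * d ^ 6 * (t - 3) ^ 9 * (t ^ 2 + 3 * t + 9) ∧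
    ((C91 t d).Δ ≠ 0 → (C91 t d).c₄ ^ 3 / (C91 t d).Δ =
      (t + 6) ^ 3 * (t ^ 3 + 234 * t ^ 2 + 756 * t + 2160) ^ 3 / ((t - 3) ^ 9 * (t ^ 2 + 3 * t + 9))) :=
  stmt0_general t d
end
end

section
/- Let K be a field of characteristic 0 and let t, d ∈ K. The Weierstrass curve C_{9,3}(t,d) has invariants c₄ = 2⁴·3¹⁰·d²·t·(t³−24), c₆ = 2⁶·3¹⁵·d³·(t⁶−36t³+216), and discriminant Δ = 2¹²·3³⁰·d⁶·(t−3)·(t²+3t+9); moreover, if Δ ≠ 0 then its j-invariant equals t³·(t³−24)³ / ((t−3)·(t²+3t+9)). -/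
/- Both `c₄³` and `Δ` are `2¹²·3³⁰·d⁶` times a polynomial in `t` alone, and this common factor is
nonzero as soon as `Δ` is, so it cancels in the `j`-invariant. -/

noncomputable section

/-- The curve `C_{9,3}(t,d)`. -/
def C93 {K : Type*} [Field K] (t d : K) : WeierstrassCurve K :=
  { a₁ := 0, a₂ := 0, a₃ := 0,
    a₄ := -19683 * d ^ 2 * t * (t ^ 3 - 24),
    a₆ := -1062882 * d ^ 3 * (t ^ 6 - 36 * t ^ 3 + 216) }

section

variable {K : Type*} [Field K] (t d : K)

open WeierstrassCurve

theorem C93_c₄ : (C93 t d).c₄ = 2 ^ 4 * 3 ^ 10 * d ^ 2 * t * (t ^ 3 - 24) := by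
  simp only [C93, c₄, b₂, b₄]
  ring

theorem C93_c₆ : (C93 t d).c₆ = 2 ^ 6 * 3 ^ 15 * d ^ 3 * (t ^ 6 - 36 * t ^ 3 + 216) := by
  simp only [C93, c₆, b₂, b₄, b₆]
  ring

theorem C93_Δ : (C93 t d).Δ = 2 ^ 12 * 3 ^ 30 * d ^ 6 * (t - 3) * (t ^ 2 + 3 * t + 9) := by
  simp only [C93, Δ, b₂, b₄, b₆, b₈]
  ring

theorem C93_c₄_pow_three_div_Δ (hΔ : (C93 t d).Δ ≠ 0) :
    (C93 t d).c₄ ^ 3 / (C93 t d).Δ =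
      t ^ 3 * (t ^ 3 - 24) ^ 3 / ((t - 3) * (t ^ 2 + 3 * t + 9)) := by
  have hΔ_eq : (C93 t d).Δ = 2 ^ 12 * 3 ^ 30 * d ^ 6 * ((t - 3) * (t ^ 2 + 3 * t + 9)) := by
    rw [C93_Δ]
    ring
  have hc₄_cube : (C93 t d).c₄ ^ 3 = 2 ^ 12 * 3 ^ 30 * d ^ 6 * (t ^ 3 * (t ^ 3 - 24) ^ 3) := by
    rw [C93_c₄]
    ring
  rw [hΔ_eq] at hΔ ⊢
  rw [hc₄_cube, mul_div_mul_left _ _ (left_ne_zero_of_mul hΔ)]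

end

theorem stmt1_general {K : Type*} [Field K] (t d : K) :
    (C93 t d).c₄ = 2 ^ 4 * 3 ^ 10 * d ^ 2 * t * (t ^ 3 - 24) ∧
    (C93 t d).c₆ = 2 ^ 6 * 3 ^ 15 * d ^ 3 * (t ^ 6 - 36 * t ^ 3 + 216) ∧
    (C93 t d).Δ = 2 ^ 12 * 3 ^ 30 * d ^ 6 * (t - 3) * (t ^ 2 + 3 * t + 9) ∧
    ((C93 t d).Δ ≠ 0 → (C93 t d).c₄ ^ 3 / (C93 t d).Δ =
      t ^ 3 * (t ^ 3 - 24) ^ 3 / ((t - 3) * (t ^ 2 + 3 * t + 9))) :=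
  ⟨C93_c₄ t d, C93_c₆ t d, C93_Δ t d, C93_c₄_pow_three_div_Δ t d⟩

theorem stmt1 {K : Type*} [Field K] [CharZero K] (t d : K) :
    (C93 t d).c₄ = 2 ^ 4 * 3 ^ 10 * d ^ 2 * t * (t ^ 3 - 24) ∧
    (C93 t d).c₆ = 2 ^ 6 * 3 ^ 15 * d ^ 3 * (t ^ 6 - 36 * t ^ 3 + 216) ∧
    (C93 t d).Δ = 2 ^ 12 * 3 ^ 30 * d ^ 6 * (t - 3) * (t ^ 2 + 3 * t + 9) ∧
    ((C93 t d).Δ ≠ 0 → (C93 t d).c₄ ^ 3 / (C93 t d).Δ =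
      t ^ 3 * (t ^ 3 - 24) ^ 3 / ((t - 3) * (t ^ 2 + 3 * t + 9))) :=
  stmt1_general t d
end
end

section
/- Let K be a number field, 𝔭 a nonzero prime ideal of its ring of integers, ν_𝔭 the normalized 𝔭-adic additive valuation on K, and let t ∈ K with ν_𝔭(t) = −k for some integer k > 0. Then the rational expressions j₁ = (t+6)³(t³+234t²+756t+2160)³/((t−3)⁹(t²+3t+9)), j₂ = (t+6)³·t³·(t²−6t+36)³/((t−3)³(t²+3t+9)³), and j₃ = t³(t³−24)³/((t−3)(t²+3t+9)) are defined (all factors in the denominators are nonzero) and satisfy ν_𝔭(j₁) = −k, ν_𝔭(j₂) = −3k, and ν_𝔭(j₃) = −9k. -/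
noncomputable section

open IsDedekindDomain NumberField

open scoped Classical in
/-- The normalized `𝔭`-adic additive valuation on `K`, extended by `nu v 0 = 0`. -/
def nu {K : Type*} [Field K] [NumberField K]
    (v : HeightOneSpectrum (𝓞 K)) (x : K) : ℤ :=
  if hx : x = 0 then 0
  else -Multiplicative.toAdd (WithZero.unzero ((v.valuation K).ne_zero_iff.mpr hx))

/-!
If `ν(t) < 0`, the leading term of a monic integer polynomial `p` strictly dominates the other
terms, so `ν(p(t)) = deg p · ν(t)`; in particular no factor of a numerator or denominator
vanishes. Hence `ν(jᵢ)` is `ν(t)` times the difference of the degrees of numerator and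
denominator: `12 - 11 = 1`, `12 - 9 = 3` and `12 - 3 = 9`.
-/

open Polynomial

namespace Valuation

variable {R Γ₀ : Type*} [CommRing R] [LinearOrderedCommGroupWithZero Γ₀]
  (v : Valuation R Γ₀)

theorem map_natCast_le_one : ∀ n : ℕ, v (n : R) ≤ 1
  | 0 => by simp
  | n + 1 => by
    push_cast
    exact v.map_add_le (map_natCast_le_one n) v.map_one.le

theorem map_intCast_le_one (n : ℤ) : v (n : R) ≤ 1 := by
  cases n with
  | ofNat n => simpa only [Int.ofNat_eq_natCast, Int.cast_natCast] using v.map_natCast_le_one n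
  | negSucc n => simpa only [Int.cast_negSucc, map_neg] using v.map_natCast_le_one (n + 1)

theorem map_intCast_mul_le (n : ℤ) (x : R) : v (n * x) ≤ v x := by
  simpa only [map_mul] using mul_le_of_le_one_left' (v.map_intCast_le_one n)

theorem map_aeval_of_monic_of_one_lt {p : ℤ[X]} (hp : p.Monic) {t : R} (ht : 1 < v t) :
    v (aeval t p) = v t ^ p.natDegree := by
  have hsum : aeval t p =
      t ^ p.natDegree + ∑ i ∈ Finset.range p.natDegree, (p.coeff i : R) * t ^ i := by
    conv_lhs => rw [hp.as_sum]
    simp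
  have hlow :
      v (∑ i ∈ Finset.range p.natDegree, (p.coeff i : R) * t ^ i) < v t ^ p.natDegree := by
    refine v.map_sum_lt (pow_ne_zero _ (zero_lt_one.trans ht).ne') fun i hi => ?_
    calc v ((p.coeff i : R) * t ^ i) ≤ v (t ^ i) := v.map_intCast_mul_le _ _
      _ = v t ^ i := v.map_pow _ _
      _ < v t ^ p.natDegree := pow_lt_pow_right₀ ht (Finset.mem_range.mp hi)
  rw [hsum, v.map_add_eq_of_lt_left (by rwa [v.map_pow]), v.map_pow]

end Valuation

section nu

variable {K : Type*} [Field K] [NumberField K] (v : HeightOneSpectrum (𝓞 K))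

theorem nu_eq_neg_log (x : K) : nu v x = -WithZero.log (v.valuation K x) := by
  unfold nu
  split_ifs with hx
  · simp [hx]
  · rw [WithZero.toAdd_unzero_eq_log]

theorem nu_mul {x y : K} (hx : x ≠ 0) (hy : y ≠ 0) : nu v (x * y) = nu v x + nu v y := by
  simp only [nu_eq_neg_log, map_mul, WithZero.log_mul ((v.valuation K).ne_zero_iff.mpr hx)
    ((v.valuation K).ne_zero_iff.mpr hy), neg_add]

theorem nu_div {x y : K} (hx : x ≠ 0) (hy : y ≠ 0) : nu v (x / y) = nu v x - nu v y := by
  simp only [nu_eq_neg_log, map_div₀, WithZero.log_div ((v.valuation K).ne_zero_iff.mpr hx)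
    ((v.valuation K).ne_zero_iff.mpr hy)]
  ring

theorem nu_pow (x : K) (n : ℕ) : nu v (x ^ n) = n * nu v x := by
  simp only [nu_eq_neg_log, map_pow, WithZero.log_pow, nsmul_eq_mul, mul_neg]

theorem one_lt_valuation_of_nu_neg {t : K} (ht : nu v t < 0) : 1 < v.valuation K t := by
  rw [nu_eq_neg_log, neg_lt_zero] at ht
  have h0 : v.valuation K t ≠ 0 := fun h => by simp [h] at ht
  simpa using (WithZero.lt_log_iff_exp_lt h0).mp ht

theorem aeval_ne_zero_of_monic_of_nu_neg {p : ℤ[X]} (hp : p.Monic) {t : K} (ht : nu v t < 0) :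
    aeval t p ≠ 0 := by
  have h1 := one_lt_valuation_of_nu_neg v ht
  refine (v.valuation K).ne_zero_iff.mp ?_
  rw [(v.valuation K).map_aeval_of_monic_of_one_lt hp h1]
  exact pow_ne_zero _ (zero_lt_one.trans h1).ne'

theorem nu_aeval_of_monic_of_nu_neg {p : ℤ[X]} (hp : p.Monic) {t : K} (ht : nu v t < 0) :
    nu v (aeval t p) = p.natDegree * nu v t := by
  rw [nu_eq_neg_log, (v.valuation K).map_aeval_of_monic_of_one_lt hp
    (one_lt_valuation_of_nu_neg v ht), ← map_pow, ← nu_eq_neg_log, nu_pow]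

end nu

theorem stmt8 {K : Type*} [Field K] [NumberField K] (v : HeightOneSpectrum (𝓞 K))
    (t : K) (k : ℤ) (hk : 0 < k) (ht : nu v t = -k) :
    t - 3 ≠ 0 ∧ (t ^ 2 + 3 * t + 9) ≠ 0 ∧
    nu v ((t + 6) ^ 3 * (t ^ 3 + 234 * t ^ 2 + 756 * t + 2160) ^ 3 / ((t - 3) ^ 9 * (t ^ 2 + 3 * t + 9))) = -k ∧
    nu v ((t + 6) ^ 3 * t ^ 3 * (t ^ 2 - 6 * t + 36) ^ 3 / ((t - 3) ^ 3 * (t ^ 2 + 3 * t + 9) ^ 3)) = -(3 * k) ∧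
    nu v (t ^ 3 * (t ^ 3 - 24) ^ 3 / ((t - 3) * (t ^ 2 + 3 * t + 9))) = -(9 * k) := by
  have hneg : nu v t < 0 := by omega
  have factor (p : ℤ[X]) (n : ℕ) (hp : p.Monic) (hn : p.natDegree = n) :
      aeval t p ≠ 0 ∧ nu v (aeval t p) = n * nu v t :=
    ⟨aeval_ne_zero_of_monic_of_nu_neg v hp hneg, hn ▸ nu_aeval_of_monic_of_nu_neg v hp hneg⟩
  obtain ⟨ne0, -⟩ := factor X 1 monic_X natDegree_X
  obtain ⟨ne1, nu1⟩ := factor (X + 6) 1 (by monicity!) (by compute_degree!)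
  obtain ⟨ne2, nu2⟩ :=
    factor (X ^ 3 + 234 * X ^ 2 + 756 * X + 2160) 3 (by monicity!) (by compute_degree!)
  obtain ⟨ne3, nu3⟩ := factor (X - 3) 1 (by monicity!) (by compute_degree!)
  obtain ⟨ne4, nu4⟩ := factor (X ^ 2 + 3 * X + 9) 2 (by monicity!) (by compute_degree!)
  obtain ⟨ne5, nu5⟩ := factor (X ^ 2 - 6 * X + 36) 2 (by monicity!) (by compute_degree!)
  obtain ⟨ne6, nu6⟩ := factor (X ^ 3 - 24) 3 (by monicity!) (by compute_degree!)
  simp only [map_add, map_sub, map_mul, map_pow, map_ofNat, aeval_X]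
    at ne0 ne1 nu1 ne2 nu2 ne3 nu3 ne4 nu4 ne5 nu5 ne6 nu6
  refine ⟨ne3, ne4, ?_, ?_, ?_⟩ <;>
    simp only [nu_div, nu_mul, nu_pow, ne_eq, mul_eq_zero, pow_eq_zero_iff, OfNat.ofNat_ne_zero,
      not_false_eq_true, or_self, ne0, ne1, ne2, ne3, ne4, ne5, ne6,
      nu1, nu2, nu3, nu4, nu5, nu6, ht] <;>
    ring
end
end
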